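/- Let f ∈ F on ℝ^d and β, β* ∈ ℝ^d. Then the LS-EM update satisfies M(β*, β) ∈ span{β, β*}. Moreover, if the angle ∠(β, β*) equals 0 or π/2 (i.e. β is parallel or orthogonal to β*), then M(β*, β) ∈ span{β}. -/

import Mathlib

open MeasureTheory Real Filter InnerProductGeometry
open scoped RealInnerProductSpace

noncomputable section

/-- Euclidean space `ℝ^d`. -/
abbrev E (d : ℕ) := EuclideanSpace ℝ (Fin d)

/-- The location-scale density `f_{β,σ}(x) = σ^{-d} f((x-β)/σ)` for the base log-concave
density `f(x) = (1/C) exp(-g(‖x‖₂))`. -/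
def densHD (d : ℕ) (g : ℝ → ℝ) (C σ : ℝ) (β x : E d) : ℝ :=
  (1 / σ ^ d) * ((1 / C) * Real.exp (-g (‖x - β‖ / σ)))

/-- `F_{β,σ}(x) = g(‖x+β‖₂/σ) - g(‖x-β‖₂/σ)`. -/
def FHD (d : ℕ) (g : ℝ → ℝ) (σ : ℝ) (β x : E d) : ℝ :=
  g (‖x + β‖ / σ) - g (‖x - β‖ / σ)

/-- The population LS-EM update `M(β*, β) = E_{X ~ f_{β*,σ}}[X tanh(F_{β,σ}(X)/2)]`. -/
def MHD (d : ℕ) (g : ℝ → ℝ) (C σ : ℝ) (βs β : E d) : E d :=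
  ∫ x : E d, (densHD d g C σ βs x * Real.tanh (FHD d g σ β x / 2)) • x

/-- Membership in the class `F` of rotation invariant log-concave densities on `ℝ^d`:
`f(x) = (1/C) exp(-g(‖x‖₂))` with `g` convex and strictly increasing on `[0,∞)`,
`g(0) = 0`, integrating to one and with unit variance in each coordinate. -/
structure InClassFHD (d : ℕ) (g : ℝ → ℝ) (C : ℝ) : Prop where
  convexOn : ConvexOn ℝ (Set.Ici (0 : ℝ)) g
  strictMonoOn : StrictMonoOn g (Set.Ici (0 : ℝ))
  g_zero : g 0 = 0
  C_pos : 0 < C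
  integral_one : ∫ x : E d, (1 / C) * Real.exp (-g ‖x‖) = 1
  coord_var_one : ∀ i : Fin d, ∫ x : E d, (x i) ^ 2 * ((1 / C) * Real.exp (-g ‖x‖)) = 1

/-- The regularity condition: differentiation under the integral sign is valid for the
integrals defining `M`, with respect to both parameters. -/
def RegularHD (d : ℕ) (g : ℝ → ℝ) (C σ : ℝ) : Prop :=
  ∀ βs β : E d,
    HasFDerivAt (fun z : E d => MHD d g C σ z β)
      (∫ x : E d,
        fderiv ℝ (fun z : E d =>
          (densHD d g C σ z x * Real.tanh (FHD d g σ β x / 2)) • x) βs) βs ∧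
    HasFDerivAt (fun b : E d => MHD d g C σ βs b)
      (∫ x : E d,
        fderiv ℝ (fun b : E d =>
          (densHD d g C σ βs x * Real.tanh (FHD d g σ b x / 2)) • x) β) β

/-!
`M(β*, β)` is the first moment of a weight that depends on `x` only through the distances
`‖x - β*‖` and `‖x ± β‖`. Hence a linear isometry fixing `β*` and `β` fixes `M`, and one fixing
`β*` and negating `β` negates `M`, because swapping `x + β` and `x - β` negates `F` and `tanh` is
odd. The reflection in `span{β, β*}` therefore fixes `M`, so `M ∈ span{β, β*}`; when `β ⟂ β*`, the
reflection in the line `ℝ β*` negates `M`, so `M ⟂ β*`, which leaves `M ∈ span{β}`.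
-/

section InnerProductSpace

variable {F : Type*} [NormedAddCommGroup F] [InnerProductSpace ℝ F]

theorem Submodule.mem_orthogonal_of_reflection_eq_neg {K : Submodule ℝ F}
    [K.HasOrthogonalProjection] [Kᗮ.HasOrthogonalProjection] {x : F}
    (hx : K.reflection x = -x) : x ∈ Kᗮ := by
  rw [← Submodule.reflection_eq_self_iff, Submodule.reflection_orthogonal_apply, hx, neg_neg]

theorem mem_span_singleton_of_mem_span_pair_of_inner_eq_zero {u v x : F} (huv : ⟪u, v⟫ = 0)
    (hx : x ∈ Submodule.span ℝ {u, v}) (hvx : ⟪v, x⟫ = 0) : x ∈ ℝ ∙ u := by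
  obtain ⟨a, b, rfl⟩ := Submodule.mem_span_pair.mp hx
  have hb : b * ‖v‖ ^ 2 = 0 := by
    rwa [inner_add_right, real_inner_smul_right, real_inner_smul_right, real_inner_comm, huv,
      mul_zero, zero_add, real_inner_self_eq_norm_sq] at hvx
  have hbv : b • v = 0 := by
    rcases mul_eq_zero.mp hb with h | h
    · rw [h, zero_smul]
    · rw [norm_eq_zero.mp (pow_eq_zero_iff two_ne_zero |>.mp h), smul_zero]
  rw [hbv, add_zero]
  exact Submodule.smul_mem _ _ (Submodule.mem_span_singleton_self u)

variable [FiniteDimensional ℝ F] [MeasurableSpace F] [BorelSpace F]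

theorem integral_smul_eq_smul_map_integral (e : F ≃ₗᵢ[ℝ] F) {w : F → ℝ} {s : ℝ}
    (hw : ∀ x, w (e x) = s * w x) :
    ∫ x, w x • x = s • e (∫ x, w x • x) := by
  calc ∫ x, w x • x = ∫ x, w (e x) • e x := (integral_comp e fun y => w y • y).symm
    _ = ∫ x, s • e (w x • x) := by simp only [hw, map_smul, smul_smul]
    _ = s • e (∫ x, w x • x) := by
      rw [integral_smul]
      exact congrArg (s • ·) (e.toLinearIsometry.integral_comp_comm _)

end InnerProductSpace

section LSEM

variable {d : ℕ} {g : ℝ → ℝ} {C σ : ℝ} {βs β : E d}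

theorem densHD_map {e : E d ≃ₗᵢ[ℝ] E d} (he : e βs = βs) (x : E d) :
    densHD d g C σ βs (e x) = densHD d g C σ βs x := by
  conv_lhs => rw [densHD, ← he, ← map_sub, e.norm_map]
  rfl

theorem FHD_map_of_map_eq {e : E d ≃ₗᵢ[ℝ] E d} (he : e β = β) (x : E d) :
    FHD d g σ β (e x) = FHD d g σ β x := by
  conv_lhs => rw [FHD, ← he, ← map_add, ← map_sub, e.norm_map, e.norm_map]
  rfl

theorem FHD_map_of_map_eq_neg {e : E d ≃ₗᵢ[ℝ] E d} (he : e β = -β) (x : E d) :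
    FHD d g σ β (e x) = -FHD d g σ β x := by
  have hβ : β = -e β := by rw [he, neg_neg]
  conv_lhs => rw [FHD, hβ, sub_neg_eq_add, ← sub_eq_add_neg, ← map_add, ← map_sub,
    e.norm_map, e.norm_map]
  rw [FHD, neg_sub]

theorem map_MHD_of_map_eq {e : E d ≃ₗᵢ[ℝ] E d} (hβs : e βs = βs) (hβ : e β = β) :
    e (MHD d g C σ βs β) = MHD d g C σ βs β := by
  refine (one_smul ℝ (e _)).symm.trans (integral_smul_eq_smul_map_integral e fun x => ?_).symm
  rw [densHD_map hβs, FHD_map_of_map_eq hβ, one_mul]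

theorem map_MHD_of_map_eq_neg {e : E d ≃ₗᵢ[ℝ] E d} (hβs : e βs = βs) (hβ : e β = -β) :
    e (MHD d g C σ βs β) = -MHD d g C σ βs β := by
  have h := integral_smul_eq_smul_map_integral (s := -1)
    (w := fun x => densHD d g C σ βs x * tanh (FHD d g σ β x / 2)) e fun x => by
    rw [densHD_map hβs, FHD_map_of_map_eq_neg hβ, neg_div, tanh_neg]
    ring
  rw [MHD]
  conv_rhs => rw [h, neg_one_smul, neg_neg]

theorem MHD_mem_span_pair : MHD d g C σ βs β ∈ Submodule.span ℝ {β, βs} := by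
  set K := Submodule.span ℝ ({β, βs} : Set (E d))
  rw [← Submodule.reflection_eq_self_iff (K := K)]
  exact map_MHD_of_map_eq
    (Submodule.reflection_mem_subspace_eq_self (Submodule.subset_span (by simp)))
    (Submodule.reflection_mem_subspace_eq_self (Submodule.subset_span (by simp)))

theorem inner_MHD_eq_zero_of_inner_eq_zero (h : ⟪β, βs⟫ = 0) :
    ⟪βs, MHD d g C σ βs β⟫ = 0 := by
  have hβ : β ∈ (ℝ ∙ βs)ᗮ := Submodule.mem_orthogonal_singleton_iff_inner_left.mpr h
  refine Submodule.mem_orthogonal_singleton_iff_inner_right.mp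
    (Submodule.mem_orthogonal_of_reflection_eq_neg (map_MHD_of_map_eq_neg ?_ ?_))
  · exact Submodule.reflection_mem_subspace_eq_self (Submodule.mem_span_singleton_self βs)
  · exact Submodule.reflection_mem_subspace_orthogonalComplement_eq_neg hβ

end LSEM

theorem stmt6_general (d : ℕ) (g : ℝ → ℝ) (C σ : ℝ) (βs β : E d) :
    MHD d g C σ βs β ∈ Submodule.span ℝ ({β, βs} : Set (E d)) ∧
    (β ≠ 0 → βs ≠ 0 → (angle β βs = 0 ∨ angle β βs = π / 2) →
      MHD d g C σ βs β ∈ Submodule.span ℝ ({β} : Set (E d))) := by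
  refine ⟨MHD_mem_span_pair, fun _ _ hangle => ?_⟩
  rcases hangle with hangle | hangle
  · obtain ⟨-, r, -, rfl⟩ := angle_eq_zero_iff.mp hangle
    have hspan : MHD d g C σ (r • β) β ∈ Submodule.span ℝ {β, r • β} := MHD_mem_span_pair
    rwa [Set.pair_comm, Submodule.span_insert_eq_span
      (Submodule.smul_mem _ r (Submodule.mem_span_singleton_self β))] at hspan
  · have horth : ⟪β, βs⟫ = 0 := inner_eq_zero_iff_angle_eq_pi_div_two β βs |>.mpr hangle
    exact mem_span_singleton_of_mem_span_pair_of_inner_eq_zero horth MHD_mem_span_pair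
      (inner_MHD_eq_zero_of_inner_eq_zero horth)

/-- LS-EM is 2-dimensional: `M(β*, β) ∈ span{β, β*}`; moreover if the
angle between `β` and `β*` is `0` or `π/2`, then `M(β*, β) ∈ span{β}`. -/
theorem stmt6 (d : ℕ) (g : ℝ → ℝ) (C σ : ℝ) (hσ : 0 < σ)
    (hF : InClassFHD d g C) (βs β : E d) :
    MHD d g C σ βs β ∈ Submodule.span ℝ ({β, βs} : Set (E d)) ∧
    (β ≠ 0 → βs ≠ 0 → (angle β βs = 0 ∨ angle β βs = π / 2) →
      MHD d g C σ βs β ∈ Submodule.span ℝ ({β} : Set (E d))) :=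
  stmt6_general d g C σ βs β
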